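/- Let $1 \le k \le n$, let $A$ be a Hermitian $n\times n$ complex matrix belonging to the G\u00e5rding cone $\Gamma_k^+$, and let $C$ be a Hermitian positive semidefinite $n\times n$ matrix. Then $A + C$ also belongs to $\Gamma_k^+$, i.e. $\sigma_j(A+C) > 0$ for all $1 \le j \le k$. -/

import Mathlib

/-!
Adding a positive semidefinite `C` can only raise the sorted eigenvalues (Weyl): if `A + C` had
more eigenvalues below `a` than `A`, a dimension count would give a nonzero vector on which the
Rayleigh quotient of `A` is `≥ a` while that of `A + C` is `< a`. So it suffices that `Γ_k^+` is
stable under raising one coordinate. As `σ_j(b, λ) = σ_j(λ) + b σ_{j-1}(λ)`, this follows once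
`(a, λ) ∈ Γ_k^+` forces `σ_j(λ) > 0` for all `j < k`, which is proved by induction on `k`.
The coefficients of `P(x) = ∏ (x + λ_i)` are the `σ_j(λ)`, and its derivatives are real-rooted
(Rolle). If `σ_k(λ) ≤ 0` while `σ_j(λ) > 0` for `j < k`, the derivative `h = P^{(m)}` of degree
`k + 1` has a critical point `r ≥ 0` with `h(r) ≤ 0`; but `((x + a) P)^{(m+1)} = (x + a) h' +
(m + 1) h` has positive multiples of the `σ_j(a, λ)` as coefficients, so it is positive at `r`.
-/

open Matrix
open scoped ComplexOrder

/-- The `k`-th elementary symmetric function of a finite family of reals. -/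
noncomputable def esymmR {ι : Type*} [Fintype ι] (k : ℕ) (lam : ι → ℝ) : ℝ :=
  ∑ s ∈ Finset.univ.powersetCard k, ∏ i ∈ s, lam i

/-- `σ_k(A)`: the `k`-th elementary symmetric function of the (real) eigenvalues of a
Hermitian matrix `A`. -/
noncomputable def sigmaH {n : ℕ} {A : Matrix (Fin n) (Fin n) ℂ}
    (hA : A.IsHermitian) (k : ℕ) : ℝ :=
  esymmR k hA.eigenvalues

/-- `T_k(A)`: the `k`-th Newton transformation of a Hermitian matrix `A`,
`T_k(A) = ∑_{j=0}^k (-1)^j σ_{k-j}(A) A^j`. -/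
noncomputable def newtonH {n : ℕ} {A : Matrix (Fin n) (Fin n) ℂ}
    (hA : A.IsHermitian) (k : ℕ) : Matrix (Fin n) (Fin n) ℂ :=
  ∑ j ∈ Finset.range (k + 1), ((-1 : ℂ) ^ j * (sigmaH hA (k - j) : ℂ)) • A ^ j

open Polynomial
open scoped Finset

namespace Multiset

variable {R : Type*} [CommSemiring R]

theorem esymm_zero (s : Multiset R) : s.esymm 0 = 1 := by
  simp [esymm, powersetCard_zero_left]

theorem esymm_cons_succ (a : R) (s : Multiset R) (j : ℕ) :
    (a ::ₘ s).esymm (j + 1) = s.esymm (j + 1) + a * s.esymm j := by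
  simp [esymm, powersetCard_cons, ← sum_map_mul_left]

theorem esymm_zero_cons (s : Multiset R) (j : ℕ) : (0 ::ₘ s).esymm j = s.esymm j := by
  cases j <;> simp [esymm_zero, esymm_cons_succ]

theorem esymm_replicate_zero_add (n : ℕ) (s : Multiset R) (j : ℕ) :
    (replicate n 0 + s).esymm j = s.esymm j := by
  induction n with
  | zero => simp
  | succ n ih => rw [replicate_succ, cons_add, esymm_zero_cons, ih]

theorem natDegree_prod_X_add_C [Nontrivial R] (s : Multiset R) :
    (s.map fun r => X + C r).prod.natDegree = card s := by
  rw [natDegree_multiset_prod_of_monic _ (by simpa using fun r _ => monic_X_add_C r)]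
  simp

theorem coeff_iterate_derivative_prod_X_add_C (s : Multiset R) {m i : ℕ} (h : i + m ≤ card s) :
    (derivative^[m] (s.map fun r => X + C r).prod).coeff i
      = (i + m).descFactorial m • s.esymm (card s - (i + m)) := by
  rw [coeff_iterate_derivative, prod_X_add_C_coeff s h]

theorem eval_zero_iterate_derivative_prod_X_add_C (s : Multiset R) {m : ℕ} (h : m ≤ card s) :
    (derivative^[m] (s.map fun r => X + C r).prod).eval 0
      = m.factorial • s.esymm (card s - m) := by
  rw [← coeff_zero_eq_eval_zero, coeff_iterate_derivative_prod_X_add_C s (by omega), zero_add,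
    Nat.descFactorial_self]

theorem coeff_iterate_derivative_prod_X_add_C_nonneg (s : Multiset ℝ) {k m i : ℕ}
    (hs : ∀ j < k, 0 ≤ s.esymm j) (hi : card s < i + m + k) :
    0 ≤ (derivative^[m] (s.map fun r => X + C r).prod).coeff i := by
  by_cases h : i + m ≤ card s
  · rw [coeff_iterate_derivative_prod_X_add_C s h]
    exact nsmul_nonneg (hs _ (by omega)) _
  · rw [coeff_iterate_derivative, smul_eq_zero_of_right]
    exact coeff_eq_zero_of_natDegree_lt (by rw [natDegree_prod_X_add_C]; omega)

theorem leadingCoeff_iterate_derivative_prod_X_add_C_pos (s : Multiset ℝ) {m : ℕ}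
    (h : m ≤ card s) : 0 < (derivative^[m] (s.map fun r => X + C r).prod).leadingCoeff := by
  have htop : 0 < (derivative^[m] (s.map fun r => X + C r).prod).coeff (card s - m) := by
    rw [coeff_iterate_derivative_prod_X_add_C s (by omega), Nat.sub_add_cancel h, Nat.sub_self,
      esymm_zero, nsmul_one]
    exact_mod_cast Nat.descFactorial_pos.2 h
  have hdeg := natDegree_iterate_derivative (s.map fun r => X + C r).prod m
  rw [natDegree_prod_X_add_C] at hdeg
  rwa [leadingCoeff, natDegree_eq_of_le_of_coeff_ne_zero hdeg htop.ne']

theorem splits_prod_X_add_C (s : Multiset ℝ) : (s.map fun r => X + C r).prod.Splits :=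
  Splits.multisetProd fun f hf => by
    obtain ⟨r, -, rfl⟩ := mem_map.1 hf
    exact Splits.X_add_C r

end Multiset

namespace Polynomial

theorem Splits.derivative {f : ℝ[X]} (hf : f.Splits) : f.derivative.Splits := by
  rw [splits_iff_card_roots] at hf ⊢
  have := card_roots_le_derivative f
  have := natDegree_derivative_le f
  have := card_roots' f.derivative
  omega

theorem Splits.iterate_derivative {f : ℝ[X]} (hf : f.Splits) (m : ℕ) :
    (Polynomial.derivative^[m] f).Splits := by
  induction m with
  | zero => exact hf
  | succ m ih => rw [Function.iterate_succ_apply']; exact ih.derivative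

theorem Splits.eval_derivative_pos {f : ℝ[X]} (hf : f.Splits) (hroots : f.roots ≠ 0) {x : ℝ}
    (hx : 0 < f.eval x) (hlt : ∀ z ∈ f.roots, z < x) : 0 < f.derivative.eval x := by
  rw [hf.eval_derivative_eq_eval_mul_sum hx.ne']
  refine mul_pos hx ?_
  simpa using Multiset.sum_lt_sum_of_nonempty (f := fun _ => (0 : ℝ)) hroots
    fun z hz => one_div_pos.2 (sub_pos.2 (hlt z hz))

theorem monotoneOn_eval_of_coeff_nonneg {p : ℝ[X]} (hp : ∀ i ≠ 0, 0 ≤ p.coeff i) :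
    MonotoneOn (fun x => p.eval x) (Set.Ici 0) := by
  intro x hx y _ hxy
  simp only [eval_eq_sum_range]
  refine Finset.sum_le_sum fun i _ => ?_
  rcases eq_or_ne i 0 with rfl | hi
  · simp
  · exact mul_le_mul_of_nonneg_left (pow_le_pow_left₀ hx hxy i) (hp i hi)

theorem exists_nonneg_isRoot_of_eval_zero_nonpos {p : ℝ[X]} (hlc : 0 < p.leadingCoeff)
    (h0 : p.eval 0 ≤ 0) : ∃ r, 0 ≤ r ∧ p.IsRoot r := by
  have hdeg : 0 < p.degree := by
    refine natDegree_pos_iff_degree_pos.1 (Nat.pos_of_ne_zero fun hdeg => ?_)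
    rw [leadingCoeff, hdeg, coeff_zero_eq_eval_zero] at hlc
    linarith
  obtain ⟨T, hT, hT0⟩ := ((p.tendsto_atTop_of_leadingCoeff_nonneg hdeg hlc.le
    ).eventually_ge_atTop 0 |>.and (Filter.eventually_ge_atTop 0)).exists
  obtain ⟨r, hr, hroot⟩ := intermediate_value_Icc hT0 p.continuous.continuousOn ⟨h0, hT⟩
  exact ⟨r, hr.1, hroot⟩

/-- If `f(r) > 0`, then `f` increases on `[r, ∞)`, so all roots of `f` lie left of `r`, which
forces `f'(r) > 0`. -/
theorem Splits.exists_nonneg_isRoot_derivative_eval_nonpos {f : ℝ[X]} (hf : f.Splits)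
    (hlc : 0 < f.derivative.leadingCoeff) (h0 : f.derivative.eval 0 ≤ 0)
    (hcoeff : ∀ i ≠ 0, 0 ≤ f.derivative.coeff i) :
    ∃ r, 0 ≤ r ∧ f.derivative.IsRoot r ∧ f.eval r ≤ 0 := by
  obtain ⟨r, hr0, hr⟩ := exists_nonneg_isRoot_of_eval_zero_nonpos hlc h0
  refine ⟨r, hr0, hr, ?_⟩
  by_contra! hpos
  have hderiv : ∀ x ∈ Set.Ici r, 0 ≤ f.derivative.eval x := fun x hx =>
    hr.eq_zero ▸ monotoneOn_eval_of_coeff_nonneg hcoeff (Set.mem_Ici.2 hr0)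
      (Set.mem_Ici.2 (hr0.trans hx)) hx
  have hmono : MonotoneOn (fun x => f.eval x) (Set.Ici r) :=
    monotoneOn_of_deriv_nonneg (convex_Ici r) f.continuousOn f.differentiableOn fun x hx => by
      rw [interior_Ici] at hx
      simpa using hderiv x (Set.Ioi_subset_Ici_self hx)
  have hlt : ∀ z ∈ f.roots, z < r := fun z hz => by
    by_contra! hz'
    have := hmono (Set.mem_Ici.2 le_rfl) (Set.mem_Ici.2 hz') hz'
    simp only [(isRoot_of_mem_roots hz).eq_zero] at this
    linarith
  have hdeg : f.natDegree ≠ 0 := fun hdeg => by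
    simp [derivative_of_natDegree_zero hdeg] at hlc
  exact (hf.eval_derivative_pos (hf.roots_ne_zero hdeg) hpos hlt).ne' hr.eq_zero

end Polynomial

def gardingCone (k : ℕ) : Set (Multiset ℝ) :=
  {s | ∀ j, 1 ≤ j → j ≤ k → 0 < s.esymm j}

theorem gardingCone_antitone : Antitone gardingCone :=
  fun _ _ hkl _ hs j hj1 hj => hs j hj1 (hj.trans hkl)

theorem esymm_pos_of_mem_gardingCone {s : Multiset ℝ} {k : ℕ} (hs : s ∈ gardingCone k) :
    ∀ j ≤ k, 0 < s.esymm j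
  | 0, _ => by simp [Multiset.esymm_zero]
  | j + 1, hj => hs (j + 1) (by omega) hj

theorem eval_iterate_derivative_prod_X_add_C_pos {s : Multiset ℝ} {k m : ℕ}
    (hs : s ∈ gardingCone k) (hcard : Multiset.card s = k + m) {x : ℝ} (hx : 0 ≤ x) :
    0 < (derivative^[m] (s.map fun r => X + C r).prod).eval x := by
  have h0 : 0 < (derivative^[m] (s.map fun r => X + C r).prod).eval 0 := by
    rw [Multiset.eval_zero_iterate_derivative_prod_X_add_C s (by omega)]
    exact nsmul_pos (esymm_pos_of_mem_gardingCone hs _ (by omega)) m.factorial_ne_zero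
  refine h0.trans_le (monotoneOn_eval_of_coeff_nonneg (fun i hi => ?_) (Set.mem_Ici.2 le_rfl)
    hx hx)
  exact Multiset.coeff_iterate_derivative_prod_X_add_C_nonneg s (k := k + 1)
    (fun j hj => (esymm_pos_of_mem_gardingCone hs j (by omega)).le) (by omega)

theorem esymm_pos_of_cons_mem_gardingCone_of_forall_lt {a : ℝ} {t : Multiset ℝ} {k : ℕ}
    (hcone : a ::ₘ t ∈ gardingCone (k + 1)) (hlow : ∀ j < k, 0 < t.esymm j) :
    0 < t.esymm k := by
  wlog hcard : k < Multiset.card t generalizing t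
  · have := this (t := Multiset.replicate (k + 1) 0 + t)
      (by simpa only [← Multiset.add_cons, gardingCone, Set.mem_ofPred_eq,
        Multiset.esymm_replicate_zero_add] using hcone)
      (by simpa only [Multiset.esymm_replicate_zero_add] using hlow)
      (by rw [Multiset.card_add, Multiset.card_replicate]; omega)
    rwa [Multiset.esymm_replicate_zero_add] at this
  obtain ⟨m, hm⟩ : ∃ m, Multiset.card t = k + m + 1 :=
    ⟨Multiset.card t - (k + 1), by omega⟩
  set G := (t.map fun r => X + C r).prod
  by_contra! hneg
  have h0 : (derivative^[m + 1] G).eval 0 ≤ 0 := by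
    rw [Multiset.eval_zero_iterate_derivative_prod_X_add_C t (by omega),
      show Multiset.card t - (m + 1) = k by omega, nsmul_eq_mul]
    exact mul_nonpos_of_nonneg_of_nonpos (Nat.cast_nonneg _) hneg
  have hcoeff : ∀ i ≠ 0, 0 ≤ (derivative^[m + 1] G).coeff i := fun i hi =>
    Multiset.coeff_iterate_derivative_prod_X_add_C_nonneg t (fun j hj => (hlow j hj).le)
      (by omega)
  have hlc := Multiset.leadingCoeff_iterate_derivative_prod_X_add_C_pos t (m := m + 1) (by omega)
  rw [Function.iterate_succ_apply'] at h0 hcoeff hlc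
  obtain ⟨r, hr0, hroot, hr⟩ : ∃ r, 0 ≤ r ∧ (derivative (derivative^[m] G)).IsRoot r ∧
      (derivative^[m] G).eval r ≤ 0 :=
    ((Multiset.splits_prod_X_add_C t).iterate_derivative m
      ).exists_nonneg_isRoot_derivative_eval_nonpos hlc h0 hcoeff
  have hq := eval_iterate_derivative_prod_X_add_C_pos hcone (m := m + 1)
    (by rw [Multiset.card_cons]; omega) hr0
  rw [Multiset.map_cons, Multiset.prod_cons, show (X + C a) * G = G * X + C a * G by ring,
    iterate_map_add, iterate_derivative_mul_X, iterate_derivative_C_mul,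
    Function.iterate_succ_apply'] at hq
  simp only [eval_add, eval_mul, eval_C, eval_X, add_tsub_cancel_right, hroot.eq_zero,
    nsmul_eq_mul, eval_natCast, zero_mul, mul_zero, zero_add, add_zero] at hq
  exact hq.not_ge (mul_nonpos_of_nonneg_of_nonpos (by positivity) hr)

theorem esymm_pos_of_cons_mem_gardingCone {a : ℝ} {t : Multiset ℝ} {k : ℕ}
    (hcone : a ::ₘ t ∈ gardingCone (k + 1)) : ∀ j ≤ k, 0 < t.esymm j := by
  induction k with
  | zero => simp [Multiset.esymm_zero]
  | succ k ih =>
    have hlow := ih (gardingCone_antitone (by omega) hcone)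
    intro j hj
    rcases hj.lt_or_eq with hj | rfl
    · exact hlow j (by omega)
    · exact esymm_pos_of_cons_mem_gardingCone_of_forall_lt hcone fun j hj => hlow j (by omega)

theorem cons_mem_gardingCone_of_le {a b : ℝ} {t : Multiset ℝ} {k : ℕ} (hab : a ≤ b)
    (hcone : a ::ₘ t ∈ gardingCone k) : b ::ₘ t ∈ gardingCone k := by
  intro j hj1 hjk
  obtain ⟨j, rfl⟩ : ∃ i, j = i + 1 := ⟨j - 1, by omega⟩
  obtain ⟨k, rfl⟩ : ∃ l, k = l + 1 := ⟨k - 1, by omega⟩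
  have ha := hcone (j + 1) hj1 hjk
  have ht := esymm_pos_of_cons_mem_gardingCone hcone j (by omega)
  rw [Multiset.esymm_cons_succ] at ha ⊢
  nlinarith

theorem mem_gardingCone_of_rel_le {s t : Multiset ℝ} {k : ℕ}
    (hst : Multiset.Rel (· ≤ ·) s t) (hs : s ∈ gardingCone k) : t ∈ gardingCone k := by
  suffices ∀ u, u + s ∈ gardingCone k → u + t ∈ gardingCone k by
    simpa using this 0 (by simpa using hs)
  clear hs
  induction hst with
  | zero => exact fun _ hu => hu
  | cons hab _ ih =>
    intro u hu
    rw [Multiset.add_cons, ← Multiset.cons_add] at hu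
    have := cons_mem_gardingCone_of_le hab (Multiset.cons_add _ u _ ▸ ih _ hu)
    rwa [Multiset.add_cons]

theorem le_of_antitone_of_card_filter_lt_le {α : Type*} [LinearOrder α] {N : ℕ}
    {f g : Fin N → α} (hf : Antitone f) (hg : Antitone g)
    (h : ∀ a, #{i | g i < a} ≤ #{i | f i < a}) (i : Fin N) : f i ≤ g i := by
  by_contra! hi
  have hg' : Finset.Ici i ⊆ ({j | g j < f i} : Finset _) := fun j hj => by
    simpa using (hg (Finset.mem_Ici.1 hj)).trans_lt hi
  have hf' : ({j | f j < f i} : Finset _) ⊆ Finset.Ioi i := fun j hj => by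
    simpa using lt_of_not_ge fun hji => (hf hji).not_gt (by simpa using hj)
  have := (Finset.card_le_card hg').trans ((h (f i)).trans (Finset.card_le_card hf'))
  simp only [Fin.card_Ici, Fin.card_Ioi] at this
  omega

namespace Matrix

variable {𝕜 n : Type*} [RCLike 𝕜] [Fintype n] [DecidableEq n] {A B : Matrix n n 𝕜}

theorem dotProduct_mulVec_conj_diagonal (U : Matrix n n 𝕜) (d : n → 𝕜) (x : n → 𝕜) :
    star x ⬝ᵥ ((U * diagonal d * star U) *ᵥ x)
      = ∑ i, d i * ((starRingEnd 𝕜) ((star U *ᵥ x) i) * (star U *ᵥ x) i) := by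
  have hx : star x ᵥ* U = star (star U *ᵥ x) := by
    rw [star_mulVec, star_eq_conjTranspose, conjTranspose_conjTranspose]
  rw [← mulVec_mulVec, ← mulVec_mulVec, dotProduct_mulVec, hx]
  simp only [dotProduct, mulVec_diagonal, Pi.star_apply, RCLike.star_def]
  exact Finset.sum_congr rfl fun i _ => by ring

namespace IsHermitian

noncomputable def eigenCoords (hA : A.IsHermitian) : (n → 𝕜) →ₗ[𝕜] n → 𝕜 :=
  (star (hA.eigenvectorUnitary : Matrix n n 𝕜)).mulVecLin

theorem eigenCoords_ne_zero (hA : A.IsHermitian) {x : n → 𝕜} (hx : x ≠ 0) :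
    hA.eigenCoords x ≠ 0 := fun hy => hx <| by
  rw [← one_mulVec x, ← Unitary.mul_star_self_of_mem hA.eigenvectorUnitary.2, ← mulVec_mulVec]
  exact (congrArg _ hy).trans (mulVec_zero _)

theorem re_dotProduct_mulVec_eq_sum (hA : A.IsHermitian) (x : n → 𝕜) :
    RCLike.re (star x ⬝ᵥ (A *ᵥ x))
      = ∑ i, hA.eigenvalues i * ‖hA.eigenCoords x i‖ ^ 2 := by
  conv_lhs => rw [hA.spectral_theorem, Unitary.conjStarAlgAut_apply,
    dotProduct_mulVec_conj_diagonal]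
  simp only [Function.comp_apply, RCLike.conj_mul, map_sum, ← RCLike.ofReal_pow,
    ← RCLike.ofReal_mul, RCLike.ofReal_re, eigenCoords, mulVecLin_apply]

theorem re_dotProduct_self_eq_sum (hA : A.IsHermitian) (x : n → 𝕜) :
    RCLike.re (star x ⬝ᵥ x) = ∑ i, ‖hA.eigenCoords x i‖ ^ 2 := by
  have h1 : (hA.eigenvectorUnitary : Matrix n n 𝕜) * diagonal (fun _ => 1) *
      star (hA.eigenvectorUnitary : Matrix n n 𝕜) = 1 := by
    rw [diagonal_one, mul_one, Unitary.mul_star_self_of_mem hA.eigenvectorUnitary.2]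
  nth_rw 2 [← one_mulVec x]
  rw [← h1, dotProduct_mulVec_conj_diagonal]
  simp only [RCLike.conj_mul, one_mul, map_sum, ← RCLike.ofReal_pow, RCLike.ofReal_re,
    eigenCoords, mulVecLin_apply]

theorem mul_re_dotProduct_self_le (hA : A.IsHermitian) {a : ℝ} {x : n → 𝕜}
    (hx : ∀ i, hA.eigenvalues i < a → hA.eigenCoords x i = 0) :
    a * RCLike.re (star x ⬝ᵥ x) ≤ RCLike.re (star x ⬝ᵥ (A *ᵥ x)) := by
  rw [hA.re_dotProduct_mulVec_eq_sum, hA.re_dotProduct_self_eq_sum, Finset.mul_sum]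
  refine Finset.sum_le_sum fun i _ => ?_
  by_cases hi : hA.eigenvalues i < a
  · simp [hx i hi]
  · exact mul_le_mul_of_nonneg_right (not_lt.1 hi) (by positivity)

theorem re_dotProduct_mulVec_lt (hA : A.IsHermitian) {a : ℝ} {x : n → 𝕜} (hx0 : x ≠ 0)
    (hx : ∀ i, ¬ hA.eigenvalues i < a → hA.eigenCoords x i = 0) :
    RCLike.re (star x ⬝ᵥ (A *ᵥ x)) < a * RCLike.re (star x ⬝ᵥ x) := by
  obtain ⟨i, hi⟩ := Function.ne_iff.1 (hA.eigenCoords_ne_zero hx0)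
  rw [hA.re_dotProduct_mulVec_eq_sum, hA.re_dotProduct_self_eq_sum, Finset.mul_sum]
  refine Finset.sum_lt_sum (fun j _ => ?_) ⟨i, Finset.mem_univ i, ?_⟩
  · by_cases hj : hA.eigenvalues j < a
    · exact mul_le_mul_of_nonneg_right hj.le (by positivity)
    · simp [hx j hj]
  · have hia : hA.eigenvalues i < a := by_contra fun h => hi (hx i h)
    exact mul_lt_mul_of_pos_right hia (by positivity)

theorem card_filter_eigenvalues_eq (hA : A.IsHermitian) (p : ℝ → Prop) [DecidablePred p] :
    #{i | p (hA.eigenvalues i)} = #{i | p (hA.eigenvalues₀ i)} :=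
  Finset.card_equiv (Fintype.equivOfCardEq (Fintype.card_fin _)).symm fun i => by
    simp only [Finset.mem_filter, Finset.mem_univ, true_and]
    rfl

theorem map_eigenvalues_univ (hA : A.IsHermitian) :
    Finset.univ.val.map hA.eigenvalues = Finset.univ.val.map hA.eigenvalues₀ := by
  rw [show hA.eigenvalues = hA.eigenvalues₀ ∘ (Fintype.equivOfCardEq (Fintype.card_fin _)).symm
    from rfl, ← Multiset.map_map, Multiset.map_univ_val_equiv]

theorem card_filter_eigenvalues_lt_le (hA : A.IsHermitian) (hB : B.IsHermitian)
    (hAB : (B - A).PosSemidef) (a : ℝ) :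
    #{i | hB.eigenvalues i < a} ≤ #{i | hA.eigenvalues i < a} := by
  by_contra! hcard
  -- the kernel of `L` is the intersection of the spectral subspaces of `A` for `[a, ∞)`
  -- and of `B` for `(-∞, a)`
  let L : (n → 𝕜) →ₗ[𝕜]
      ({i // hA.eigenvalues i < a} → 𝕜) × ({i // ¬ hB.eigenvalues i < a} → 𝕜) :=
    (LinearMap.funLeft 𝕜 𝕜 Subtype.val ∘ₗ hA.eigenCoords).prod
      (LinearMap.funLeft 𝕜 𝕜 Subtype.val ∘ₗ hB.eigenCoords)
  have hrank : Module.finrank 𝕜 (({i // hA.eigenvalues i < a} → 𝕜) ×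
      ({i // ¬ hB.eigenvalues i < a} → 𝕜)) < Module.finrank 𝕜 (n → 𝕜) := by
    simp only [Module.finrank_prod, Module.finrank_fintype_fun_eq_card, Fintype.card_subtype]
    have := Finset.card_filter_add_card_filter_not (s := Finset.univ) (hB.eigenvalues · < a)
    rw [Finset.card_univ] at this
    omega
  obtain ⟨x, hxL, hx0⟩ :=
    (Submodule.ne_bot_iff _).1 (LinearMap.ker_ne_bot_of_finrank_lt (f := L) hrank)
  have hA' := hA.mul_re_dotProduct_self_le (a := a) (x := x) fun i hi =>
    congr_fun (congrArg Prod.fst hxL) ⟨i, hi⟩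
  have hB' := hB.re_dotProduct_mulVec_lt hx0 fun i hi =>
    congr_fun (congrArg Prod.snd hxL) ⟨i, hi⟩
  have hAB' := hAB.re_dotProduct_nonneg x
  rw [sub_mulVec, dotProduct_sub, map_sub] at hAB'
  linarith

theorem rel_le_eigenvalues (hA : A.IsHermitian) (hB : B.IsHermitian)
    (hAB : (B - A).PosSemidef) :
    Multiset.Rel (· ≤ ·) (Finset.univ.val.map hA.eigenvalues)
      (Finset.univ.val.map hB.eigenvalues) := by
  rw [hA.map_eigenvalues_univ, hB.map_eigenvalues_univ, Multiset.rel_map]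
  refine Multiset.rel_refl_of_refl_on fun i _ =>
    le_of_antitone_of_card_filter_lt_le hA.eigenvalues₀_antitone hB.eigenvalues₀_antitone
      (fun a => ?_) i
  rw [← hA.card_filter_eigenvalues_eq (· < a), ← hB.card_filter_eigenvalues_eq (· < a)]
  exact hA.card_filter_eigenvalues_lt_le hB hAB a

end IsHermitian

end Matrix

theorem sigmaH_eq_esymm {n : ℕ} {A : Matrix (Fin n) (Fin n) ℂ} (hA : A.IsHermitian) (k : ℕ) :
    sigmaH hA k = (Finset.univ.val.map hA.eigenvalues).esymm k := by
  rw [sigmaH, esymmR, Finset.esymm_map_val]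

theorem gardingCone_add_posSemidef_general {n : ℕ} (k : ℕ)
    (A C : Matrix (Fin n) (Fin n) ℂ) (hA : A.IsHermitian)
    (hAk : ∀ j, 1 ≤ j → j ≤ k → 0 < sigmaH hA j)
    (hC : C.PosSemidef) (hAC : (A + C).IsHermitian) :
    ∀ j, 1 ≤ j → j ≤ k → 0 < sigmaH hAC j := by
  have hrel := hA.rel_le_eigenvalues hAC (by rwa [add_sub_cancel_left])
  simp only [sigmaH_eq_esymm] at hAk ⊢
  exact mem_gardingCone_of_rel_le hrel hAk

/-- The Gårding cone is stable under addition of a positive semidefinite matrix: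
if the Hermitian matrix `A` lies in `Γ_k^+` and `C` is Hermitian positive
semidefinite, then `A + C` lies in `Γ_k^+`. -/
theorem gardingCone_add_posSemidef {n : ℕ} (k : ℕ) (hk1 : 1 ≤ k) (hk : k ≤ n)
    (A C : Matrix (Fin n) (Fin n) ℂ) (hA : A.IsHermitian)
    (hAk : ∀ j, 1 ≤ j → j ≤ k → 0 < sigmaH hA j)
    (hC : C.PosSemidef) (hAC : (A + C).IsHermitian) :
    ∀ j, 1 ≤ j → j ≤ k → 0 < sigmaH hAC j :=
  gardingCone_add_posSemidef_general k A C hA hAk hC hAC
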